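/- If u, v ∈ C and C is a maximal k-clique in G(V, E ∪ {uv}) with |C| < k, then there exists a maximal k-clique C_u in G(V,E) with u ∈ C_u such that C = (C_u ∩ N(v)) ∪ {u,v}, where N(v) is the closed neighborhood of v in G(V,E). -/
import Mathlib


def insEdge {V : Type*} (G : SimpleGraph V) (u v : V) : SimpleGraph V :=
  G ⊔ SimpleGraph.fromEdgeSet {s(u, v)}

def IsMaxClique {V : Type*} [DecidableEq V] (G : SimpleGraph V) (C : Finset V) : Prop :=
  G.IsClique (C : Set V) ∧ ∀ D : Finset V, G.IsClique (D : Set V) → C ⊆ D → C = D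

def IsMaxKClique {V : Type*} [DecidableEq V] (G : SimpleGraph V) (k : ℕ) (C : Finset V) : Prop :=
  (G.IsClique (C : Set V) ∧ C.card = k) ∨ (IsMaxClique G C ∧ C.card < k)

/-- Closed neighborhood of `w` in `G`, as a finset. -/
def closedNbhd {V : Type*} [Fintype V] [DecidableEq V] (G : SimpleGraph V)
    [DecidableRel G.Adj] (w : V) : Finset V :=
  insert w (G.neighborFinset w)

lemma insEdge_adj {V : Type*} (G : SimpleGraph V) (u v a b : V) (huv : u ≠ v) :
    (insEdge G u v).Adj a b ↔ G.Adj a b ∨ (a = u ∧ b = v) ∨ (a = v ∧ b = u) := by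
  simp only [insEdge, SimpleGraph.sup_adj, SimpleGraph.fromEdgeSet_adj,
    Set.mem_singleton_iff, Sym2.eq, Sym2.rel_iff', Prod.mk.injEq, Prod.swap_prod_mk]
  constructor
  · rintro (h | ⟨(⟨rfl, rfl⟩ | ⟨rfl, rfl⟩), _⟩) <;> tauto
  · rintro (h | ⟨rfl, rfl⟩ | ⟨rfl, rfl⟩) <;> tauto

lemma exists_max_clique {V : Type*} [Fintype V] [DecidableEq V] (G : SimpleGraph V)
    (S : Finset V) (hS : G.IsClique (S : Set V)) :
    ∃ M : Finset V, S ⊆ M ∧ IsMaxClique G M := by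
  classical
  obtain ⟨M, hM, hmax⟩ := Finset.exists_max_image
    ((Finset.univ : Finset (Finset V)).filter fun D => S ⊆ D ∧ G.IsClique (D : Set V))
    Finset.card ⟨S, by simp [hS]⟩
  simp only [Finset.mem_filter, Finset.mem_univ, true_and] at hM hmax
  refine ⟨M, hM.1, hM.2, fun D hD hsub => ?_⟩
  exact Finset.eq_of_subset_of_card_le hsub (hmax D ⟨hM.1.trans hsub, hD⟩)

/-- If `u, v ∈ C` and `C` is a maximal `k`-clique in `G(V, E ∪ {uv})` with `|C| < k`, then there
exists a maximal `k`-clique `C_u` in `G(V,E)` with `u ∈ C_u` such that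
`C = (C_u ∩ N(v)) ∪ {u,v}`. -/
theorem stmt_11 {V : Type*} [Fintype V] [DecidableEq V] (G : SimpleGraph V)
    [DecidableRel G.Adj] (u v : V) (huv : u ≠ v) (k : ℕ) (C : Finset V)
    (hu : u ∈ C) (hv : v ∈ C) (hC : IsMaxKClique (insEdge G u v) k C) (hcard : C.card < k) :
    ∃ Cu : Finset V, IsMaxKClique G k Cu ∧ u ∈ Cu ∧
      C = (Cu ∩ closedNbhd G v) ∪ {u, v} := by
  classical
  have hCmax : IsMaxClique (insEdge G u v) C := by
    rcases hC with ⟨_, hk⟩ | h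
    · omega
    · exact h.1
  have hCcl : (insEdge G u v).IsClique (C : Set V) := hCmax.1
  set S : Finset V := C.erase v with hSdef
  have hScl : G.IsClique (S : Set V) := by
    intro a ha b hb hab
    simp only [hSdef, Finset.coe_erase, Set.mem_diff, Finset.mem_coe,
      Set.mem_singleton_iff] at ha hb
    have := hCcl ha.1 hb.1 hab
    rw [insEdge_adj G u v a b huv] at this
    rcases this with h | ⟨_, rfl⟩ | ⟨rfl, _⟩
    · exact h
    · exact absurd rfl hb.2
    · exact absurd rfl ha.2
  have huS : u ∈ S := Finset.mem_erase.2 ⟨huv, hu⟩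
  have hScard : S.card < k := by
    have h1 : S.card = C.card - 1 := by rw [hSdef]; exact Finset.card_erase_of_mem hv
    have hc0 : 0 < C.card := Finset.card_pos.2 ⟨v, hv⟩
    omega
  obtain ⟨M, hSM, hMcl, hMmax⟩ := exists_max_clique G S hScl
  -- choose Cu
  obtain ⟨Cu, hSCu, hCuCl, huCu, hCuK⟩ :
      ∃ Cu : Finset V, S ⊆ Cu ∧ G.IsClique (Cu : Set V) ∧ u ∈ Cu ∧ IsMaxKClique G k Cu := by
    by_cases hk : k ≤ M.card
    · obtain ⟨Cu, h1, h2, h3⟩ := Finset.exists_subsuperset_card_eq hSM hScard.le hk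
      exact ⟨Cu, h1, hMcl.subset (by exact_mod_cast h2), h1 huS, Or.inl ⟨hMcl.subset (by exact_mod_cast h2), h3⟩⟩
    · exact ⟨M, hSM, hMcl, hSM huS, Or.inr ⟨⟨hMcl, hMmax⟩, by omega⟩⟩
  refine ⟨Cu, hCuK, huCu, ?_⟩
  ext w
  simp only [Finset.mem_union, Finset.mem_inter, Finset.mem_insert, Finset.mem_singleton,
    closedNbhd, SimpleGraph.mem_neighborFinset]
  constructor
  · intro hw
    by_cases hwv : w = v
    · exact Or.inr (Or.inr hwv)
    by_cases hwu : w = u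
    · exact Or.inr (Or.inl hwu)
    refine Or.inl ⟨hSCu (Finset.mem_erase.2 ⟨hwv, hw⟩), Or.inr ?_⟩
    have := hCcl (Finset.mem_coe.2 hv) (Finset.mem_coe.2 hw) (fun h => hwv h.symm)
    rw [insEdge_adj G u v v w huv] at this
    rcases this with h | ⟨h, _⟩ | ⟨_, rfl⟩
    · exact h
    · exact absurd h.symm huv
    · exact absurd rfl hwu
  · rintro (⟨hwCu, hwN⟩ | rfl | rfl)
    · by_contra hwC
      have hclins : (insEdge G u v).IsClique ((insert w C : Finset V) : Set V) := by
        rw [Finset.coe_insert]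
        refine hCcl.insert fun b hb hbw => ?_
        rw [insEdge_adj G u v w b huv]
        by_cases hbv : b = v
        · subst hbv
          rcases hwN with rfl | h
          · exact absurd hb hwC
          · exact Or.inl h.symm
        · exact Or.inl (hCuCl (Finset.mem_coe.2 hwCu)
            (Finset.mem_coe.2 (hSCu (Finset.mem_erase.2 ⟨hbv, hb⟩))) hbw)
      have := hCmax.2 (insert w C) hclins (Finset.subset_insert w C)
      exact hwC (this ▸ Finset.mem_insert_self w C)
    · exact hu
    · exact hv
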